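/- arXiv:2111.12312 — 3 statements merged into one kernel-verified Lean document; each statement's English description precedes it below -/
import Mathlib

section
/- Fix k ∈ (0,∞). For i = 1,…,ℓ, let (X_i,𝒳_i) and (Y_i,𝒴_i) be measurable spaces with measurable distortion functions ρ_i: X_i×Y_i → [0,∞], let α_i ∈ (0,∞), and define the weighted distortion function ρ_{(ℓ)}((x₁,…,x_ℓ),(y₁,…,y_ℓ)) = Σ_{i=1}^ℓ α_i·ρ_i(x_i,y_i). Suppose that for each i, μ_i is a σ-finite measure on (X_i,𝒳_i) that is ρ_i^{1/k}-subregular of dimension m_i ∈ (0,∞) with subregularity constants c_i ∈ (0,∞) and δ_i ∈ (0,∞]. Then the product measure μ^{(ℓ)} = μ₁ ⊗ ⋯ ⊗ μ_ℓ satisfies μ^{(ℓ)}(B_{ρ_{(ℓ)}^{1/k}}(y^{(ℓ)},δ)) ≤ c_{(ℓ)}·δ^{m_{(ℓ)}} for all y^{(ℓ)} ∈ Y₁×⋯×Y_ℓ and δ ∈ (0,δ_{(ℓ)}), where m_{(ℓ)} = Σ_{i=1}^ℓ m_i, c_{(ℓ)} = [∏_{i=1}^ℓ Γ(1+m_i/k)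 / Γ(1+Σ_{i=1}^ℓ m_i/k)]·∏_{i=1}^ℓ c_i·α_i^{-m_i/k}, and δ_{(ℓ)} = min{α₁^{1/k}δ₁,…,α_ℓ^{1/k}δ_ℓ}. -/
/-!
After the substitution `r = tᵏ`, subregularity of `ρᵢ^{1/k}` says that `αᵢ ρᵢ(·, yᵢ)` obeys a
sublevel bound `μᵢ {f < r} ≤ C rᵃ` for `0 < r ≤ s`, with exponent `a = mᵢ/k` and constant
`C = cᵢ αᵢ^{-mᵢ/k}`. These bounds multiply like a convolution: if `g` has bound `C' rᵇ` under `ν`,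
then by Tonelli `(μ ⊗ ν){f + g < s} = ∫ μ{f < s - g} dν ≤ C ∫ (s - g)₊ᵃ dν`, and the layer-cake
formula turns the last integral into `∫₀ˢ a tᵃ⁻¹ ν{g < s - t} dt ≤ a C' B(a, b + 1) s^{a+b}`, where
`a B(a, b + 1) = Γ(1 + a) Γ(1 + b) / Γ(1 + a + b)`. Induction over the factors then produces the
constant `∏ Γ(1 + aᵢ) / Γ(1 + ∑ aᵢ)`.
-/

open MeasureTheory
open scoped ENNReal

open Set ProbabilityTheory

lemma rpow_one_div_lt_ofReal_iff {x : ℝ≥0∞} {k t : ℝ} (hk : 0 < k) (ht : 0 ≤ t) :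
    x ^ (1 / k) < ENNReal.ofReal t ↔ x < ENNReal.ofReal (t ^ k) := by
  rw [one_div, ENNReal.rpow_inv_lt_iff hk, ENNReal.ofReal_rpow_of_nonneg ht hk.le]

lemma integral_rpow_mul_sub_rpow {p q s : ℝ} (hp : 0 < p) (hq : 0 < q) (hs : 0 < s) :
    ∫ u in (0 : ℝ)..s, u ^ (p - 1) * (s - u) ^ (q - 1) = s ^ (p + q - 1) * beta p q := by
  have hβ : Complex.betaIntegral p q = (beta p q : ℂ) := by
    rw [Complex.betaIntegral_eq_Gamma_mul_div _ _ (by simpa) (by simpa), beta]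
    push_cast [← Complex.Gamma_ofReal]
    rfl
  apply Complex.ofReal_injective
  rw [← intervalIntegral.integral_ofReal, Complex.ofReal_mul, ← hβ,
    Complex.ofReal_cpow hs.le]
  push_cast
  rw [← Complex.betaIntegral_scaled _ _ hs]
  refine intervalIntegral.integral_congr fun u hu => ?_
  rw [uIcc_of_le hs.le] at hu
  rw [Complex.ofReal_cpow hu.1, Complex.ofReal_cpow (sub_nonneg.2 hu.2)]
  push_cast
  rfl

lemma setLIntegral_Ioo_rpow_mul_sub_rpow {p q s : ℝ} (hp : 0 < p) (hq : 0 < q) (hs : 0 < s) :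
    ∫⁻ u in Ioo 0 s, ENNReal.ofReal (u ^ (p - 1) * (s - u) ^ (q - 1)) =
      ENNReal.ofReal (s ^ (p + q - 1) * beta p q) := by
  have hint := integral_rpow_mul_sub_rpow hp hq hs
  rw [intervalIntegral.integral_of_le hs.le, integral_Ioc_eq_integral_Ioo] at hint
  have hpos : 0 < s ^ (p + q - 1) * beta p q := mul_pos (by positivity) (beta_pos hp hq)
  rw [← hint, ofReal_integral_eq_lintegral_ofReal]
  · exact Integrable.of_integral_ne_zero (by rw [hint]; exact hpos.ne')
  · filter_upwards [ae_restrict_mem measurableSet_Ioo] with u hu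
    have := Real.rpow_nonneg hu.1.le (p - 1)
    have := Real.rpow_nonneg (sub_nonneg.2 hu.2.le) (q - 1)
    positivity

lemma integral_mul_rpow_sub_one {a : ℝ} (ha : 0 < a) (x : ℝ) :
    ∫ t in (0 : ℝ)..x, a * t ^ (a - 1) = x ^ a := by
  rw [intervalIntegral.integral_const_mul, integral_rpow (Or.inl (by linarith)), sub_add_cancel,
    Real.zero_rpow ha.ne', sub_zero]
  field_simp

lemma lt_toReal_ofReal_sub_iff {s t : ℝ} {x : ℝ≥0∞} (ht : 0 ≤ t) :
    t < (ENNReal.ofReal s - x).toReal ↔ x < ENNReal.ofReal (s - t) := by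
  rw [← ENNReal.ofReal_lt_iff_lt_toReal ht (ENNReal.sub_ne_top ENNReal.ofReal_ne_top),
    lt_tsub_iff_left, ← lt_tsub_iff_right, ENNReal.ofReal_sub s ht]

def SublevelPowerBound {A : Type*} [MeasurableSpace A] (μ : Measure A) (f : A → ℝ≥0∞)
    (C a s : ℝ) : Prop :=
  ∀ r : ℝ, 0 < r → r ≤ s → μ {x | f x < ENNReal.ofReal r} ≤ ENNReal.ofReal (C * r ^ a)

namespace SublevelPowerBound

section

variable {A B : Type*} [MeasurableSpace A] [MeasurableSpace B] {μ : Measure A} {ν : Measure B}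
  {f : A → ℝ≥0∞} {g : B → ℝ≥0∞} {a b C Ca Cb s : ℝ}

lemma mono (h : SublevelPowerBound μ f C a s) {s' : ℝ} (hs' : s' ≤ s) :
    SublevelPowerBound μ f C a s' :=
  fun r hr hrs => h r hr (hrs.trans hs')

lemma measure_lt_le (h : SublevelPowerBound μ f C a s) {r : ℝ} (hr : 0 ≤ r) (hrs : r ≤ s) :
    μ {x | f x < ENNReal.ofReal r} ≤ ENNReal.ofReal (C * r ^ a) := by
  rcases hr.eq_or_lt with rfl | hr
  · simp
  · exact h r hr hrs

lemma comp_measurableEquiv {e : A ≃ᵐ B} (he : MeasurePreserving e μ ν)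
    (h : SublevelPowerBound ν g C a s) : SublevelPowerBound μ (g ∘ e) C a s :=
  fun r hr hrs => (he.measure_preimage_equiv _).trans_le (h r hr hrs)

lemma lintegral_rpow_sub_le (hν : SublevelPowerBound ν g C b s) (hg : Measurable g)
    (ha : 0 < a) (hb : 0 ≤ b) (hC : 0 ≤ C) (hs : 0 < s) :
    ∫⁻ y, ENNReal.ofReal ((ENNReal.ofReal s - g y).toReal ^ a) ∂ν ≤
      ENNReal.ofReal (Real.Gamma (1 + a) * Real.Gamma (1 + b) / Real.Gamma (1 + a + b) * C *
        s ^ (a + b)) := by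
  set F : ℝ → ℝ≥0∞ := fun t => ENNReal.ofReal (a * C) * ENNReal.ofReal (t ^ (a - 1) * (s - t) ^ b)
  have layer_cake : ∫⁻ y, ENNReal.ofReal ((ENNReal.ofReal s - g y).toReal ^ a) ∂ν =
      ∫⁻ t in Ioi 0, ν {y | g y < ENNReal.ofReal (s - t)} * ENNReal.ofReal (a * t ^ (a - 1)) := by
    simp_rw [← integral_mul_rpow_sub_one ha]
    rw [lintegral_comp_eq_lintegral_meas_lt_mul ν (f := fun y => (ENNReal.ofReal s - g y).toReal)
      (ae_of_all _ fun _ => ENNReal.toReal_nonneg) (by fun_prop)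
      (fun t _ => (intervalIntegral.intervalIntegrable_rpow' (by linarith)).const_mul a)
      ?nonneg]
    case nonneg =>
      filter_upwards [ae_restrict_mem measurableSet_Ioi] with t ht
      have := Real.rpow_nonneg (le_of_lt ht) (a - 1)
      positivity
    refine setLIntegral_congr_fun measurableSet_Ioi fun t ht => ?_
    simp_rw [lt_toReal_ofReal_sub_iff (le_of_lt ht)]
  have pointwise : ∀ t ∈ Ioi (0 : ℝ),
      ν {y | g y < ENNReal.ofReal (s - t)} * ENNReal.ofReal (a * t ^ (a - 1)) ≤
        (Ioo 0 s).indicator F t := by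
    rintro t (ht : 0 < t)
    rcases lt_or_ge t s with hts | hst
    · rw [indicator_of_mem (show t ∈ Ioo 0 s from ⟨ht, hts⟩)]
      have := Real.rpow_nonneg ht.le (a - 1)
      have := Real.rpow_nonneg (sub_nonneg.2 hts.le) b
      calc _ ≤ ENNReal.ofReal (C * (s - t) ^ b) * ENNReal.ofReal (a * t ^ (a - 1)) :=
            mul_le_mul_left (hν.measure_lt_le (by linarith) (by linarith)) _
        _ = F t := by
          simp only [F]
          rw [← ENNReal.ofReal_mul (by positivity), ← ENNReal.ofReal_mul (by positivity)]
          ring_nf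
    · simp [ENNReal.ofReal_eq_zero.2 (sub_nonpos.2 hst)]
  rw [layer_cake]
  calc _ ≤ ∫⁻ t in Ioi 0, (Ioo 0 s).indicator F t := setLIntegral_mono' measurableSet_Ioi pointwise
    _ = ∫⁻ t in Ioo 0 s, F t := by
      rw [setLIntegral_indicator measurableSet_Ioo, inter_eq_left.2 Ioo_subset_Ioi_self]
    _ = _ := by
      have beta_integral := setLIntegral_Ioo_rpow_mul_sub_rpow ha (by linarith : 0 < b + 1) hs
      rw [add_sub_cancel_right] at beta_integral
      rw [lintegral_const_mul _ (by fun_prop), beta_integral,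
        ← ENNReal.ofReal_mul (by positivity)]
      have hΓ : Real.Gamma (1 + a) = a * Real.Gamma a := by
        rw [add_comm, Real.Gamma_add_one ha.ne']
      rw [beta, hΓ, show a + (b + 1) - 1 = a + b by ring, show a + (b + 1) = 1 + a + b by ring,
        add_comm 1 b]
      ring_nf

lemma measure_prod_lt_le [SigmaFinite μ] [SigmaFinite ν]
    (hμ : SublevelPowerBound μ f Ca a s) (hν : SublevelPowerBound ν g Cb b s)
    (hf : Measurable f) (hg : Measurable g) (ha : 0 < a) (hb : 0 ≤ b) (hCa : 0 ≤ Ca)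
    (hCb : 0 ≤ Cb) (hs : 0 < s) :
    μ.prod ν {p | f p.1 + g p.2 < ENNReal.ofReal s} ≤
      ENNReal.ofReal (Real.Gamma (1 + a) * Real.Gamma (1 + b) / Real.Gamma (1 + a + b) *
        (Ca * Cb) * s ^ (a + b)) := by
  set h : B → ℝ := fun y => (ENNReal.ofReal s - g y).toReal
  have h_le : ∀ y, h y ≤ s := fun y => ENNReal.toReal_le_of_le_ofReal hs.le tsub_le_self
  have section_eq : ∀ y, (fun x => (x, y)) ⁻¹' {p : A × B | f p.1 + g p.2 < ENNReal.ofReal s} =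
      {x | f x < ENNReal.ofReal (h y)} := by
    intro y
    ext x
    simp only [h, mem_preimage, mem_ofPred_eq,
      ENNReal.ofReal_toReal (ENNReal.sub_ne_top ENNReal.ofReal_ne_top), lt_tsub_iff_right]
  calc μ.prod ν {p | f p.1 + g p.2 < ENNReal.ofReal s}
      = ∫⁻ y, μ {x | f x < ENNReal.ofReal (h y)} ∂ν := by
        rw [Measure.prod_apply_symm (measurableSet_lt (by fun_prop) measurable_const)]
        simp_rw [section_eq]
    _ ≤ ∫⁻ y, ENNReal.ofReal Ca * ENNReal.ofReal (h y ^ a) ∂ν := lintegral_mono fun y =>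
        (hμ.measure_lt_le ENNReal.toReal_nonneg (h_le y)).trans_eq (ENNReal.ofReal_mul hCa)
    _ = ENNReal.ofReal Ca * ∫⁻ y, ENNReal.ofReal (h y ^ a) ∂ν :=
        lintegral_const_mul _ (by fun_prop)
    _ ≤ ENNReal.ofReal Ca * ENNReal.ofReal (Real.Gamma (1 + a) * Real.Gamma (1 + b) /
          Real.Gamma (1 + a + b) * Cb * s ^ (a + b)) :=
        mul_le_mul_right (hν.lintegral_rpow_sub_le hg ha hb hCb hs) _
    _ = _ := by
        rw [← ENNReal.ofReal_mul hCa]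
        ring_nf

lemma prod [SigmaFinite μ] [SigmaFinite ν]
    (hμ : SublevelPowerBound μ f Ca a s) (hν : SublevelPowerBound ν g Cb b s)
    (hf : Measurable f) (hg : Measurable g) (ha : 0 < a) (hb : 0 ≤ b) (hCa : 0 ≤ Ca)
    (hCb : 0 ≤ Cb) :
    SublevelPowerBound (μ.prod ν) (fun p => f p.1 + g p.2)
      (Real.Gamma (1 + a) * Real.Gamma (1 + b) / Real.Gamma (1 + a + b) * (Ca * Cb)) (a + b) s :=
  fun _ hr hrs => (hμ.mono hrs).measure_prod_lt_le (hν.mono hrs) hf hg ha hb hCa hCb hr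

end

lemma pi {s : ℝ} {n : ℕ} {X : Fin n → Type*} [∀ i, MeasurableSpace (X i)]
    {μ : ∀ i, Measure (X i)} [∀ i, SigmaFinite (μ i)] {f : ∀ i, X i → ℝ≥0∞} {a C : Fin n → ℝ}
    (h : ∀ i, SublevelPowerBound (μ i) (f i) (C i) (a i) s) (hf : ∀ i, Measurable (f i))
    (ha : ∀ i, 0 < a i) (hC : ∀ i, 0 ≤ C i) :
    SublevelPowerBound (Measure.pi μ) (fun x => ∑ i, f i (x i))
      ((∏ i, Real.Gamma (1 + a i)) / Real.Gamma (1 + ∑ i, a i) * ∏ i, C i) (∑ i, a i) s := by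
  induction n with
  | zero =>
    intro r _ _
    rw [Measure.pi_of_empty]
    refine (prob_le_one (μ := Measure.dirac _)).trans ?_
    simp
  | succ n ih =>
    have Γ_pos {x : ℝ} (hx : 0 ≤ x) : 0 < Real.Gamma (1 + x) :=
      Real.Gamma_pos_of_pos (by linarith)
    have sum_nonneg : 0 ≤ ∑ j : Fin n, a (Fin.succAbove 0 j) :=
      Finset.sum_nonneg fun _ _ => (ha _).le
    have rest := ih (μ := fun j => μ (Fin.succAbove 0 j)) (fun _ => h _) (fun _ => hf _)
      (fun _ => ha _) (fun _ => hC _)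
    have step := (h 0).prod rest (hf 0) (by fun_prop) (ha 0) sum_nonneg (hC 0)
      (mul_nonneg (div_nonneg (Finset.prod_nonneg fun _ _ => (Γ_pos (ha _).le).le)
        (Γ_pos sum_nonneg).le)
        (Finset.prod_nonneg fun _ _ => hC _))
    have := step.comp_measurableEquiv (measurePreserving_piFinSuccAbove μ 0)
    convert this using 1
    · funext x
      exact Fin.sum_univ_succAbove _ 0
    · rw [Fin.prod_univ_succAbove _ 0, Fin.prod_univ_succAbove C 0, Fin.sum_univ_succAbove a 0,
        ← add_assoc]
      field_simp [(Γ_pos sum_nonneg).ne']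
    · exact Fin.sum_univ_succAbove a 0

end SublevelPowerBound

lemma sublevelPowerBound_ofReal_mul {A : Type*} [MeasurableSpace A] {μ : Measure A}
    {ρ : A → ℝ≥0∞} {k α m c t : ℝ} {δ : ℝ≥0∞} (hk : 0 < k) (hα : 0 < α) (ht : 0 ≤ t)
    (hsub : ∀ τ : ℝ, 0 < τ → ENNReal.ofReal τ < δ →
      μ {x | ρ x ^ (1 / k) < ENNReal.ofReal τ} ≤ ENNReal.ofReal (c * τ ^ m))
    (htδ : ENNReal.ofReal t < ENNReal.ofReal (α ^ (1 / k)) * δ) :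
    SublevelPowerBound μ (fun x => ENNReal.ofReal α * ρ x) (c * α ^ (-(m / k))) (m / k)
      (t ^ k) := by
  intro r hr hrt
  set u := (r / α) ^ (1 / k) with hu_def
  have hu : 0 < u := by positivity
  have hαk : 0 < α ^ (1 / k) := by positivity
  have hαu : α ^ (1 / k) * u = r ^ (1 / k) := by
    rw [hu_def, Real.div_rpow hr.le hα.le, mul_div_cancel₀ _ hαk.ne']
  have hu_δ : ENNReal.ofReal u < δ := by
    rw [← ENNReal.mul_lt_mul_iff_right (ENNReal.ofReal_pos.2 hαk).ne' ENNReal.ofReal_ne_top,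
      ← ENNReal.ofReal_mul hαk.le, hαu]
    refine lt_of_le_of_lt (ENNReal.ofReal_le_ofReal ?_) htδ
    calc r ^ (1 / k) ≤ (t ^ k) ^ (1 / k) := Real.rpow_le_rpow hr.le hrt (by positivity)
      _ = t := by rw [← Real.rpow_mul ht, mul_one_div_cancel hk.ne', Real.rpow_one]
  have set_eq : {x | ENNReal.ofReal α * ρ x < ENNReal.ofReal r} =
      {x | ρ x ^ (1 / k) < ENNReal.ofReal u} := by
    ext x
    rw [mem_ofPred, mem_ofPred, rpow_one_div_lt_ofReal_iff hk hu.le, hu_def,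
      ← Real.rpow_mul (by positivity), one_div_mul_cancel hk.ne', Real.rpow_one,
      ENNReal.ofReal_div_of_pos hα, ENNReal.lt_div_iff_mul_lt (Or.inl (ENNReal.ofReal_pos.2 hα).ne')
        (Or.inl ENNReal.ofReal_ne_top), mul_comm]
  rw [set_eq]
  refine (hsub u hu hu_δ).trans_eq ?_
  rw [← Real.rpow_mul (by positivity), Real.div_rpow hr.le hα.le, Real.rpow_neg hα.le]
  ring_nf

theorem subregular_pi_general
    {ℓ : ℕ}
    {X Y : Fin ℓ → Type*} [∀ i, MeasurableSpace (X i)] [∀ i, MeasurableSpace (Y i)]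
    (k : ℝ) (hk : 0 < k)
    (ρ : ∀ i, X i → Y i → ℝ≥0∞) (hρ : ∀ i, Measurable (Function.uncurry (ρ i)))
    (α : Fin ℓ → ℝ) (hα : ∀ i, 0 < α i)
    (μ : ∀ i, Measure (X i)) [∀ i, SigmaFinite (μ i)]
    (m c : Fin ℓ → ℝ) (δ : Fin ℓ → ℝ≥0∞)
    (hm : ∀ i, 0 < m i) (hc : ∀ i, 0 < c i)
    (hsub : ∀ i, ∀ y : Y i, ∀ t : ℝ, 0 < t → ENNReal.ofReal t < δ i →
      (μ i) {x | (ρ i x y) ^ (1 / k) < ENNReal.ofReal t} ≤ ENNReal.ofReal (c i * t ^ m i)) :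
    ∀ y : ∀ i, Y i, ∀ t : ℝ, 0 < t →
      ENNReal.ofReal t < ⨅ i, ENNReal.ofReal (α i ^ (1 / k)) * δ i →
      (Measure.pi μ)
          {x : ∀ i, X i | (∑ i, ENNReal.ofReal (α i) * ρ i (x i) (y i)) ^ (1 / k)
            < ENNReal.ofReal t} ≤
        ENNReal.ofReal
          ((∏ i, Real.Gamma (1 + m i / k)) / Real.Gamma (1 + ∑ i, m i / k) *
            (∏ i, c i * α i ^ (-(m i / k))) *
            t ^ (∑ i, m i)) := by
  intro y t ht htδ
  have factor_bound (i : Fin ℓ) :=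
    sublevelPowerBound_ofReal_mul hk (hα i) ht.le (hsub i (y i)) (htδ.trans_le (iInf_le _ i))
  have product_bound := SublevelPowerBound.pi factor_bound
    (fun i => measurable_const.mul (hρ i).of_uncurry_right) (fun i => div_pos (hm i) hk)
    (fun i => (mul_pos (hc i) (Real.rpow_pos_of_pos (hα i) _)).le) (t ^ k) (by positivity) le_rfl
  simp_rw [rpow_one_div_lt_ofReal_iff hk ht.le]
  convert product_bound using 3
  rw [← Real.rpow_mul ht.le, Finset.mul_sum]
  congr 1
  exact Finset.sum_congr rfl fun i _ => by field_simp

/-- Subregularity of the product measure `μ₁ ⊗ ⋯ ⊗ μ_ℓ` with respect to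
the `1/k`-th power of the weighted distortion `ρ_{(ℓ)}(x,y) = Σᵢ αᵢ·ρᵢ(xᵢ,yᵢ)`, for
σ-finite measures `μᵢ` that are `ρᵢ^{1/k}`-subregular of dimension `mᵢ` with constants
`cᵢ, δᵢ`. -/
theorem subregular_pi
    {ℓ : ℕ} (hℓ : 0 < ℓ)
    {X Y : Fin ℓ → Type*} [∀ i, MeasurableSpace (X i)] [∀ i, MeasurableSpace (Y i)]
    (k : ℝ) (hk : 0 < k)
    (ρ : ∀ i, X i → Y i → ℝ≥0∞) (hρ : ∀ i, Measurable (Function.uncurry (ρ i)))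
    (α : Fin ℓ → ℝ) (hα : ∀ i, 0 < α i)
    (μ : ∀ i, Measure (X i)) [∀ i, SigmaFinite (μ i)]
    (m c : Fin ℓ → ℝ) (δ : Fin ℓ → ℝ≥0∞)
    (hm : ∀ i, 0 < m i) (hc : ∀ i, 0 < c i) (hδ : ∀ i, 0 < δ i)
    (hsub : ∀ i, ∀ y : Y i, ∀ t : ℝ, 0 < t → ENNReal.ofReal t < δ i →
      (μ i) {x | (ρ i x y) ^ (1 / k) < ENNReal.ofReal t} ≤ ENNReal.ofReal (c i * t ^ m i)) :
    ∀ y : ∀ i, Y i, ∀ t : ℝ, 0 < t →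
      ENNReal.ofReal t < ⨅ i, ENNReal.ofReal (α i ^ (1 / k)) * δ i →
      (Measure.pi μ)
          {x : ∀ i, X i | (∑ i, ENNReal.ofReal (α i) * ρ i (x i) (y i)) ^ (1 / k)
            < ENNReal.ofReal t} ≤
        ENNReal.ofReal
          ((∏ i, Real.Gamma (1 + m i / k)) / Real.Gamma (1 + ∑ i, m i / k) *
            (∏ i, c i * α i ^ (-(m i / k))) *
            t ^ (∑ i, m i)) :=
  subregular_pi_general k hk ρ hρ α hα μ m c δ hm hc hsub
end

section
/- Let (X,𝒳,μ) be a measure space, (Y,𝒴) a measurable space, and ρ: X×Y → [0,∞] a measurable distortion function. Let k ∈ (0,∞) and suppose μ is ρ^{1/k}-subregular of dimension m ∈ (0,∞) with subregularity constants c ∈ (0,∞) and δ₀ ∈ (0,∞), and that μ(X) = 1. Then for all s ∈ (0,∞), sup_{y∈Y} ∫ e^{-s·ρ(x,y)} dμ(x) ≤ c·s^{-m/k}·γ(1 + m/k, s·δ₀^k) + e^{-s·δ₀^k}, where γ(a,t) = ∫₀^t u^{a-1}e^{-u} du is the lower incomplete gamma function. -/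
open MeasureTheory
open scoped ENNReal Classical

/-- `e^{-t}` for `t ∈ [0,∞]`, with the convention `e^{-∞} = 0`. -/
noncomputable def expNeg (t : ℝ≥0∞) : ℝ≥0∞ :=
  if t = ∞ then 0 else ENNReal.ofReal (Real.exp (-t.toReal))

/-!
For `z ∈ [0,∞]` and `D = δ₀^k`, `e^{-sz} ≤ ∫_0^D 1{z < u} s e^{-su} du + e^{-sD}` (with equality
when `z < D`). Integrating in `x` and swapping the integrals (Tonelli) bounds the Laplace transform
by `∫_0^D s e^{-su} μ{ρ(·,y) < u} du + e^{-sD}`. Subregularity of `ρ^{1/k}` says exactly that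
`μ{ρ(·,y) < u} ≤ c u^{m/k}` for `u < δ₀^k`, and the substitution `v = su` turns the remaining
integral into `c s^{-m/k} γ(1 + m/k, s δ₀^k)`.
-/

open Set Real

lemma expNeg_antitone : Antitone expNeg := by
  intro a b h
  unfold expNeg
  split_ifs with hb ha ha
  · exact zero_le
  · exact zero_le
  · exact absurd (top_le_iff.1 (ha ▸ h)) hb
  · exact ENNReal.ofReal_le_ofReal (exp_le_exp.2 (neg_le_neg (ENNReal.toReal_mono hb h)))

lemma expNeg_ofReal {t : ℝ} (ht : 0 ≤ t) :
    expNeg (ENNReal.ofReal t) = ENNReal.ofReal (exp (-t)) := by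
  simp [expNeg, ENNReal.toReal_ofReal ht]

lemma setLIntegral_Ioo_ofReal_eq_intervalIntegral {f : ℝ → ℝ} {a b : ℝ} (hab : a ≤ b)
    (hf : IntervalIntegrable f volume a b) (hf_nonneg : ∀ u ∈ Ioo a b, 0 ≤ f u) :
    ∫⁻ u in Ioo a b, ENNReal.ofReal (f u) = ENNReal.ofReal (∫ u in a..b, f u) := by
  rw [intervalIntegral.integral_of_le hab, integral_Ioc_eq_integral_Ioo,
    ofReal_integral_eq_lintegral_ofReal ((hf.1).mono_set Ioo_subset_Ioc_self)
      ((ae_restrict_iff' measurableSet_Ioo).2 (ae_of_all _ hf_nonneg))]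

lemma integral_mul_exp_neg_mul (s a b : ℝ) :
    ∫ u in a..b, s * exp (-(s * u)) = exp (-(s * a)) - exp (-(s * b)) := by
  have hderiv (u : ℝ) : HasDerivAt (fun u => -exp (-(s * u))) (s * exp (-(s * u))) u :=
    ((((hasDerivAt_id u).const_mul s).neg).exp).neg.congr_deriv (by simp [mul_comm])
  rw [intervalIntegral.integral_eq_sub_of_hasDerivAt (fun u _ => hderiv u)
    ((by fun_prop : Continuous fun u => s * exp (-(s * u))).intervalIntegrable a b)]
  ring

lemma setLIntegral_Ioo_mul_exp_neg_mul {s : ℝ} (hs : 0 ≤ s) {a b : ℝ} (hab : a ≤ b) :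
    ∫⁻ u in Ioo a b, ENNReal.ofReal (s * exp (-(s * u))) =
      ENNReal.ofReal (exp (-(s * a)) - exp (-(s * b))) := by
  rw [setLIntegral_Ioo_ofReal_eq_intervalIntegral hab
    ((by fun_prop : Continuous fun u => s * exp (-(s * u))).intervalIntegrable a b)
    (fun u _ => by positivity), integral_mul_exp_neg_mul]

lemma integral_mul_exp_neg_mul_mul_rpow {s : ℝ} (hs : 0 < s) {D : ℝ} (hD : 0 ≤ D) (a : ℝ) :
    ∫ u in 0..D, s * exp (-(s * u)) * u ^ a = s ^ (-a) * ∫ v in 0..s * D, v ^ a * exp (-v) := by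
  have hsubst := intervalIntegral.integral_comp_mul_left
    (fun v : ℝ => v ^ a * exp (-v)) (a := 0) (b := D) hs.ne'
  rw [mul_zero, smul_eq_mul] at hsubst
  calc ∫ u in 0..D, s * exp (-(s * u)) * u ^ a
      = s ^ (-a) * s * ∫ u in 0..D, (s * u) ^ a * exp (-(s * u)) := by
        rw [← intervalIntegral.integral_const_mul]
        refine intervalIntegral.integral_congr fun u hu => ?_
        have hu : 0 ≤ u := by simpa [hD] using hu.1
        rw [mul_rpow hs.le hu, rpow_neg hs.le]
        field_simp
    _ = s ^ (-a) * ∫ v in 0..s * D, v ^ a * exp (-v) := by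
        rw [hsubst]
        field_simp

lemma expNeg_le_setLIntegral_indicator_add {s D : ℝ} (hs : 0 ≤ s) (hD : 0 ≤ D) (z : ℝ≥0∞) :
    expNeg (ENNReal.ofReal s * z) ≤
      (∫⁻ u in Ioo 0 D, {u | z < ENNReal.ofReal u}.indicator
        (fun u => ENNReal.ofReal (s * exp (-(s * u)))) u) + ENNReal.ofReal (exp (-(s * D))) := by
  rcases lt_or_ge z (ENNReal.ofReal D) with hzD | hDz
  · obtain ⟨t, ht, rfl⟩ : ∃ t : ℝ, 0 ≤ t ∧ z = ENNReal.ofReal t :=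
      ⟨z.toReal, ENNReal.toReal_nonneg, (ENNReal.ofReal_toReal hzD.ne_top).symm⟩
    have htD : t < D := (ENNReal.ofReal_lt_ofReal_iff_of_nonneg ht).1 hzD
    have hset : {u | ENNReal.ofReal t < ENNReal.ofReal u} ∩ Ioo 0 D = Ioo t D := by
      ext u
      simp only [mem_inter_iff, mem_Ioo, ENNReal.ofReal_lt_ofReal_iff']
      constructor
      · rintro ⟨⟨htu, -⟩, -, huD⟩
        exact ⟨htu, huD⟩
      · rintro ⟨htu, huD⟩
        exact ⟨⟨htu, ht.trans_lt htu⟩, ht.trans_lt htu, huD⟩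
    have hexp : exp (-(s * D)) ≤ exp (-(s * t)) :=
      exp_le_exp.2 (neg_le_neg (mul_le_mul_of_nonneg_left htD.le hs))
    rw [← ENNReal.ofReal_mul hs, expNeg_ofReal (mul_nonneg hs ht),
      setLIntegral_indicator (measurableSet_lt measurable_const ENNReal.measurable_ofReal), hset,
      setLIntegral_Ioo_mul_exp_neg_mul hs htD.le,
      ← ENNReal.ofReal_add (sub_nonneg.2 hexp) (exp_pos _).le, sub_add_cancel]
  · calc expNeg (ENNReal.ofReal s * z)
        ≤ expNeg (ENNReal.ofReal s * ENNReal.ofReal D) := expNeg_antitone (by gcongr)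
      _ = ENNReal.ofReal (exp (-(s * D))) := by
        rw [← ENNReal.ofReal_mul hs, expNeg_ofReal (mul_nonneg hs hD)]
      _ ≤ _ := le_add_self

section

variable {X : Type*} [MeasurableSpace X] {μ : Measure X} [SFinite μ]

lemma lintegral_setLIntegral_indicator_lt {f : X → ℝ≥0∞} (hf : Measurable f) {g : ℝ → ℝ≥0∞}
    (hg : Measurable g) (S : Set ℝ) :
    ∫⁻ x, ∫⁻ u in S, {u | f x < ENNReal.ofReal u}.indicator g u ∂volume ∂μ =
      ∫⁻ u in S, g u * μ {x | f x < ENNReal.ofReal u} := by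
  have hmeas :
      Measurable (Function.uncurry fun x u => {u | f x < ENNReal.ofReal u}.indicator g u) :=
    (hg.comp measurable_snd).indicator
      (measurableSet_lt (hf.comp measurable_fst) (ENNReal.measurable_ofReal.comp measurable_snd))
  rw [lintegral_lintegral_swap hmeas.aemeasurable]
  refine lintegral_congr fun u => ?_
  rw [← lintegral_indicator_const (measurableSet_lt hf measurable_const)]
  rfl

lemma lintegral_expNeg_mul_le {f : X → ℝ≥0∞} (hf : Measurable f) {s D : ℝ} (hs : 0 ≤ s)
    (hD : 0 ≤ D) :
    ∫⁻ x, expNeg (ENNReal.ofReal s * f x) ∂μ ≤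
      (∫⁻ u in Ioo 0 D, ENNReal.ofReal (s * exp (-(s * u))) * μ {x | f x < ENNReal.ofReal u}) +
        ENNReal.ofReal (exp (-(s * D))) * μ univ := by
  calc ∫⁻ x, expNeg (ENNReal.ofReal s * f x) ∂μ
      ≤ ∫⁻ x, ((∫⁻ u in Ioo 0 D, {u | f x < ENNReal.ofReal u}.indicator
          (fun u => ENNReal.ofReal (s * exp (-(s * u)))) u) + ENNReal.ofReal (exp (-(s * D)))) ∂μ :=
        lintegral_mono fun x => expNeg_le_setLIntegral_indicator_add hs hD (f x)
    _ = _ := by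
        rw [lintegral_add_right _ measurable_const, lintegral_const,
          lintegral_setLIntegral_indicator_lt hf (by fun_prop)]

end

section Subregular

variable {X Y : Type*} [MeasurableSpace X] {μ : Measure X} {ρ : X → Y → ℝ≥0∞}

def IsSubregular (μ : Measure X) (ρ : X → Y → ℝ≥0∞) (m c δ₀ : ℝ) : Prop :=
  ∀ y : Y, ∀ t : ℝ, 0 < t → t < δ₀ → μ {x | ρ x y < ENNReal.ofReal t} ≤ ENNReal.ofReal (c * t ^ m)

lemma IsSubregular.of_rpow_one_div {m c δ₀ k : ℝ} (hk : 0 < k) (hδ₀ : 0 ≤ δ₀)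
    (h : IsSubregular μ (fun x y => ρ x y ^ (1 / k)) m c δ₀) :
    IsSubregular μ ρ (m / k) c (δ₀ ^ k) := by
  intro y t ht htδ
  have hroot : t ^ (1 / k) < δ₀ := by
    simpa [← rpow_mul hδ₀, hk.ne'] using rpow_lt_rpow ht.le htδ (one_div_pos.2 hk)
  have hball : {x | ρ x y < ENNReal.ofReal t} =
      {x | ρ x y ^ (1 / k) < ENNReal.ofReal (t ^ (1 / k))} := by
    ext x
    rw [mem_ofPred_eq, mem_ofPred_eq, ← ENNReal.ofReal_rpow_of_pos ht,
      ENNReal.rpow_lt_rpow_iff (one_div_pos.2 hk)]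
  have hpow : (t ^ (1 / k)) ^ m = t ^ (m / k) := by rw [← rpow_mul ht.le, one_div_mul_eq_div]
  rw [hball, ← hpow]
  exact h y _ (rpow_pos_of_pos ht _) hroot

theorem IsSubregular.lintegral_expNeg_le [IsProbabilityMeasure μ] {a c D : ℝ}
    (h : IsSubregular μ ρ a c D) (hρ : ∀ y, Measurable (ρ · y)) (ha : 0 ≤ a) (hc : 0 ≤ c)
    (hD : 0 ≤ D) {s : ℝ} (hs : 0 < s) (y : Y) :
    ∫⁻ x, expNeg (ENNReal.ofReal s * ρ x y) ∂μ ≤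
      ENNReal.ofReal (c * s ^ (-a) * (∫ u in 0..s * D, u ^ a * exp (-u)) + exp (-(s * D))) := by
  have hdensity_nonneg : ∀ u ∈ Icc 0 D, 0 ≤ s * exp (-(s * u)) * (c * u ^ a) :=
    fun u hu => by have := rpow_nonneg hu.1 a; positivity
  calc ∫⁻ x, expNeg (ENNReal.ofReal s * ρ x y) ∂μ
      ≤ (∫⁻ u in Ioo 0 D, ENNReal.ofReal (s * exp (-(s * u))) * μ {x | ρ x y < ENNReal.ofReal u}) +
          ENNReal.ofReal (exp (-(s * D))) * μ univ := lintegral_expNeg_mul_le (hρ y) hs.le hD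
    _ ≤ (∫⁻ u in Ioo 0 D, ENNReal.ofReal (s * exp (-(s * u)) * (c * u ^ a))) +
          ENNReal.ofReal (exp (-(s * D))) := by
        rw [measure_univ, mul_one]
        gcongr ?_ + _
        refine setLIntegral_mono' measurableSet_Ioo fun u hu => ?_
        rw [ENNReal.ofReal_mul (by positivity : 0 ≤ s * exp (-(s * u)))]
        exact mul_le_mul_right (h y u hu.1 hu.2) _
    _ = ENNReal.ofReal (∫ u in 0..D, s * exp (-(s * u)) * (c * u ^ a)) +
          ENNReal.ofReal (exp (-(s * D))) := by
        rw [setLIntegral_Ioo_ofReal_eq_intervalIntegral hD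
          (Continuous.intervalIntegrable (by fun_prop (disch := exact ha)) 0 D)
          fun u hu => hdensity_nonneg u (Ioo_subset_Icc_self hu)]
    _ = _ := by
        rw [← ENNReal.ofReal_add (intervalIntegral.integral_nonneg hD hdensity_nonneg)
          (exp_pos _).le, mul_assoc c, ← integral_mul_exp_neg_mul_mul_rpow hs hD,
          ← intervalIntegral.integral_const_mul]
        congr 3 with u
        ring

end Subregular

/-- If the probability measure `μ` is `ρ^{1/k}`-subregular of dimension
`m` with constants `c ∈ (0,∞)` and `δ₀ ∈ (0,∞)`, then for all `s ∈ (0,∞)`,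
`sup_y ∫ e^{-s·ρ(x,y)} dμ(x) ≤ c·s^{-m/k}·γ(1+m/k, s·δ₀^k) + e^{-s·δ₀^k}`, where
`γ(a,t) = ∫₀^t u^{a-1} e^{-u} du` is the lower incomplete gamma function. -/
theorem laplace_transform_bound_of_subregular
    {X Y : Type*} [MeasurableSpace X] [MeasurableSpace Y]
    (μ : Measure X) [IsProbabilityMeasure μ]
    (ρ : X → Y → ℝ≥0∞) (hρ : Measurable (Function.uncurry ρ))
    (k m c δ₀ : ℝ) (hk : 0 < k) (hm : 0 < m) (hc : 0 < c) (hδ₀ : 0 < δ₀)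
    (hsub : ∀ y : Y, ∀ t : ℝ, 0 < t → t < δ₀ →
      μ {x | (ρ x y) ^ (1 / k) < ENNReal.ofReal t} ≤ ENNReal.ofReal (c * t ^ m)) :
    ∀ s : ℝ, 0 < s →
      (⨆ y : Y, ∫⁻ x, expNeg (ENNReal.ofReal s * ρ x y) ∂μ) ≤
        ENNReal.ofReal
          (c * s ^ (-(m / k)) * (∫ u in (0:ℝ)..(s * δ₀ ^ k), u ^ (m / k) * Real.exp (-u))
            + Real.exp (-(s * δ₀ ^ k))) := by
  intro s hs
  have hsubregular : IsSubregular μ ρ (m / k) c (δ₀ ^ k) :=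
    IsSubregular.of_rpow_one_div hk hδ₀.le hsub
  exact iSup_le (hsubregular.lintegral_expNeg_le (fun _ => hρ.comp measurable_prodMk_right)
    (div_nonneg hm.le hk.le) hc.le (rpow_nonneg hδ₀.le k) hs)
end

section
/- Let X be a random variable taking values in a σ-finite measure space (X,𝒳,μ) whose distribution μ_X satisfies μ_X ≪ μ and |h_μ(X)| < ∞, let (Y,𝒴) be a measurable space, and let ρ: X×Y → [0,∞] be a measurable distortion function. Let k ∈ (0,∞) and suppose μ is ρ^{1/k}-subregular of dimension m ∈ (0,∞) with subregularity constants c ∈ (0,∞) and δ₀ = ∞. Then for all D ∈ (0,∞), the Shannon-type lower bound R_X^{SLB}(D) = h_μ(X) − inf_{s≥0}( s·D + log( sup_{y∈Y} ∫ e^{-s·ρ(x,y)} dμ(x) ) ) satisfies R_X^{SLB}(D) ≥ h_μ(X) + F_{m,k,c}(D), where F_{m,k,c}(D) = log( (m/(kD))^{m/k} / (c·Γ(1+m/k)) ) − m/k. -/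
open MeasureTheory
open scoped ENNReal Classical

/-- The natural logarithm on `[0,∞]`, with values in the extended reals. -/
noncomputable def elog (x : ℝ≥0∞) : EReal :=
  if x = 0 then ⊥ else if x = ∞ then ⊤ else ((Real.log x.toReal : ℝ) : EReal)

/-- The Shannon lower bound `R_X^{SLB}(D) = h_μ(X) − inf_{s≥0}(s·D + log ν(s))`, where
`ν(s) = sup_y ∫ e^{-s·ρ(x,y)} dμ(x)` and `h` stands for the generalized entropy
`h_μ(X)`. -/
noncomputable def RSLB {X Y : Type*} [MeasurableSpace X] [MeasurableSpace Y]
    (μ : Measure X) (ρ : X → Y → ℝ≥0∞) (h D : ℝ) : EReal :=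
  ((h : ℝ) : EReal)
    - sInf {e : EReal | ∃ s : ℝ, 0 ≤ s ∧
        e = ((s * D : ℝ) : EReal)
          + elog (⨆ y : Y, ∫⁻ x, expNeg (ENNReal.ofReal s * ρ x y) ∂μ)}

/-- `F_{m,k,c}(D) = log((m/(kD))^{m/k}/(c·Γ(1+m/k))) − m/k`. -/
noncomputable def Fmkc (m k c D : ℝ) : ℝ :=
  Real.log ((m / (k * D)) ^ (m / k) / (c * Real.Gamma (1 + m / k))) - m / k

/-!
Only the choice `s = m / (k D)` in the infimum is needed. By the layer-cake formula and the
substitution `t = e^{-s u}`, `∫ e^{-s ρ(x,y)} dμ(x) = ∫₀^∞ s e^{-s u} μ{ρ(·,y) < u} du`, and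
subregularity gives `μ{ρ(·,y) < u} ≤ c u^{m/k}`, so the supremum over `y` is at most
`c Γ(1 + m/k) s^{-m/k}`. At `s = m / (k D)`, `s D` plus the logarithm of this bound is exactly
`-F_{m,k,c}(D)`.
-/

open Set Real

lemma measurable_expNeg : Measurable expNeg :=
  Measurable.ite (measurableSet_singleton ∞) measurable_const (by fun_prop)

lemma expNeg_ne_top (t : ℝ≥0∞) : expNeg t ≠ ∞ := by
  unfold expNeg; split_ifs <;> simp

lemma toReal_expNeg_le_one (t : ℝ≥0∞) : (expNeg t).toReal ≤ 1 := by
  unfold expNeg; split_ifs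
  · simp
  · rw [ENNReal.toReal_ofReal (exp_pos _).le, exp_le_one_iff, neg_nonpos]
    exact ENNReal.toReal_nonneg

lemma exp_neg_mul_lt_toReal_expNeg_iff {s : ℝ} (hs : 0 < s) (r : ℝ≥0∞) (u : ℝ) :
    exp (-(s * u)) < (expNeg (ENNReal.ofReal s * r)).toReal ↔ r < ENNReal.ofReal u := by
  rcases eq_or_ne r ∞ with rfl | hr
  · simp [expNeg, ENNReal.mul_top, hs, (exp_pos _).not_gt]
  · have hsr : ENNReal.ofReal s * r ≠ ∞ := ENNReal.mul_ne_top ENNReal.ofReal_ne_top hr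
    rw [expNeg, if_neg hsr, ENNReal.toReal_ofReal (exp_pos _).le, exp_lt_exp, neg_lt_neg_iff,
      ENNReal.toReal_mul, ENNReal.toReal_ofReal hs.le, mul_lt_mul_iff_right₀ hs,
      ENNReal.lt_ofReal_iff_toReal_lt hr]

lemma image_exp_neg_mul_Ioi {s : ℝ} (hs : 0 < s) :
    (fun u => exp (-(s * u))) '' Ioi 0 = Ioo 0 1 := by
  ext t
  constructor
  · rintro ⟨u, hu, rfl⟩
    exact ⟨exp_pos _, exp_lt_one_iff.2 (by simp only [mem_Ioi] at hu; nlinarith)⟩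
  · rintro ⟨ht0, ht1⟩
    refine ⟨-log t / s, div_pos (neg_pos.2 (log_neg ht0 ht1)) hs, ?_⟩
    simp only
    rw [mul_div_cancel₀ _ hs.ne', neg_neg, exp_log ht0]

lemma lintegral_expNeg_mul_eq {X : Type*} [MeasurableSpace X] {μ : Measure X} {f : X → ℝ≥0∞}
    (hf : Measurable f) {s : ℝ} (hs : 0 < s) :
    ∫⁻ x, expNeg (ENNReal.ofReal s * f x) ∂μ
      = ∫⁻ u in Ioi 0, ENNReal.ofReal (s * exp (-(s * u))) * μ {x | f x < ENNReal.ofReal u} := by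
  set g : X → ℝ := fun x => (expNeg (ENNReal.ofReal s * f x)).toReal
  have hg : Measurable g :=
    ENNReal.measurable_toReal.comp (measurable_expNeg.comp (hf.const_mul _))
  have hderiv : ∀ u ∈ Ioi (0 : ℝ),
      HasDerivWithinAt (fun u => exp (-(s * u))) (-(s * exp (-(s * u)))) (Ioi 0) u := fun u _ => by
    simpa [mul_comm] using (((hasDerivAt_id u).const_mul s).neg.exp).hasDerivWithinAt
  have hinj : InjOn (fun u => exp (-(s * u))) (Ioi 0) := fun u _ v _ h => by
    simpa [hs.ne'] using exp_injective h
  calc ∫⁻ x, expNeg (ENNReal.ofReal s * f x) ∂μ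
      = ∫⁻ x, ENNReal.ofReal (g x) ∂μ := by simp only [g, ENNReal.ofReal_toReal (expNeg_ne_top _)]
    _ = ∫⁻ t in Ioi 0, μ {x | t < g x} :=
        lintegral_eq_lintegral_meas_lt μ (.of_forall fun _ => ENNReal.toReal_nonneg) hg.aemeasurable
    _ = ∫⁻ t in Ioo 0 1, μ {x | t < g x} := by
        have hvanish : ∫⁻ t in Ici 1, μ {x | t < g x} = 0 := by
          refine (setLIntegral_congr_fun measurableSet_Ici fun t ht => ?_).trans lintegral_zero
          have hempty : ∀ x, ¬ t < g x := fun x =>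
            ((toReal_expNeg_le_one _).trans (mem_Ici.1 ht)).not_gt
          simp [hempty]
        rw [← Ioo_union_Ici_eq_Ioi one_pos, lintegral_union measurableSet_Ici
          ((Iio_disjoint_Ici le_rfl).mono_left Ioo_subset_Iio_self), hvanish, add_zero]
    _ = ∫⁻ u in Ioi 0, ENNReal.ofReal |-(s * exp (-(s * u)))| * μ {x | exp (-(s * u)) < g x} := by
        rw [← image_exp_neg_mul_Ioi hs,
          lintegral_image_eq_lintegral_abs_deriv_mul measurableSet_Ioi hderiv hinj]
    _ = _ := by
        refine setLIntegral_congr_fun measurableSet_Ioi fun u _ => ?_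
        simp only [g, exp_neg_mul_lt_toReal_expNeg_iff hs, abs_neg,
          abs_of_pos (mul_pos hs (exp_pos _))]

lemma lintegral_mul_rpow_mul_exp_neg_mul {s a C : ℝ} (hs : 0 < s) (ha : -1 < a) (hC : 0 ≤ C) :
    ∫⁻ u in Ioi 0, ENNReal.ofReal (s * exp (-(s * u))) * ENNReal.ofReal (C * u ^ a)
      = ENNReal.ofReal (C * Gamma (a + 1) * s ^ (-a)) := by
  have hint : IntegrableOn (fun u : ℝ => u ^ a * exp (-(s * u))) (Ioi 0) := by
    simpa using integrableOn_rpow_mul_exp_neg_mul_rpow ha one_pos hs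
  have hgamma : ∫ u in Ioi 0, u ^ a * exp (-(s * u)) = (1 / s) ^ (a + 1) * Gamma (a + 1) := by
    simpa using integral_rpow_mul_exp_neg_mul_Ioi (by linarith : 0 < a + 1) hs
  calc ∫⁻ u in Ioi 0, ENNReal.ofReal (s * exp (-(s * u))) * ENNReal.ofReal (C * u ^ a)
      = ∫⁻ u in Ioi 0, ENNReal.ofReal (C * s * (u ^ a * exp (-(s * u)))) := by
        refine setLIntegral_congr_fun measurableSet_Ioi fun u _ => ?_
        rw [← ENNReal.ofReal_mul (mul_nonneg hs.le (exp_pos _).le)]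
        ring_nf
    _ = ENNReal.ofReal (∫ u in Ioi 0, C * s * (u ^ a * exp (-(s * u)))) := by
        refine (ofReal_integral_eq_lintegral_ofReal (hint.const_mul _) ?_).symm
        filter_upwards [ae_restrict_mem measurableSet_Ioi] with u hu
        have : 0 ≤ u ^ a := rpow_nonneg (le_of_lt hu) a
        positivity
    _ = ENNReal.ofReal (C * Gamma (a + 1) * s ^ (-a)) := by
        rw [integral_const_mul, hgamma, one_div, inv_rpow hs.le, ← rpow_neg hs.le, neg_add,
          rpow_add hs, rpow_neg_one]
        congr 1
        field_simp

lemma lintegral_expNeg_mul_le_s7 {X : Type*} [MeasurableSpace X] {μ : Measure X} {f : X → ℝ≥0∞}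
    (hf : Measurable f) {s a C : ℝ} (hs : 0 < s) (ha : -1 < a) (hC : 0 ≤ C)
    (hμ : ∀ u : ℝ, 0 < u → μ {x | f x < ENNReal.ofReal u} ≤ ENNReal.ofReal (C * u ^ a)) :
    ∫⁻ x, expNeg (ENNReal.ofReal s * f x) ∂μ ≤ ENNReal.ofReal (C * Gamma (a + 1) * s ^ (-a)) := by
  rw [lintegral_expNeg_mul_eq hf hs, ← lintegral_mul_rpow_mul_exp_neg_mul hs ha hC]
  exact setLIntegral_mono' measurableSet_Ioi fun u hu => mul_le_mul_right (hμ u hu) _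

lemma measure_lt_ofReal_le_of_rpow {X : Type*} [MeasurableSpace X] {μ : Measure X}
    {f : X → ℝ≥0∞} {k m c : ℝ} (hk : 0 < k)
    (hμ : ∀ t : ℝ, 0 < t → μ {x | f x ^ (1 / k) < ENNReal.ofReal t} ≤ ENNReal.ofReal (c * t ^ m))
    (u : ℝ) (hu : 0 < u) :
    μ {x | f x < ENNReal.ofReal u} ≤ ENNReal.ofReal (c * u ^ (m / k)) := by
  have hk' : 0 < 1 / k := one_div_pos.2 hk
  have hset : {x | f x < ENNReal.ofReal u}
      = {x | f x ^ (1 / k) < ENNReal.ofReal (u ^ (1 / k))} := by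
    ext x
    change f x < _ ↔ f x ^ (1 / k) < _
    rw [← ENNReal.ofReal_rpow_of_pos hu, ENNReal.rpow_lt_rpow_iff hk']
  rw [hset, div_eq_mul_one_div m k, mul_comm m, rpow_mul hu.le]
  exact hμ _ (rpow_pos_of_pos hu _)

lemma elog_le_log_of_le_ofReal {x : ℝ≥0∞} {K : ℝ} (hK : 0 < K) (hx : x ≤ ENNReal.ofReal K) :
    elog x ≤ (log K : EReal) := by
  have hx_top : x ≠ ∞ := ne_top_of_le_ne_top ENNReal.ofReal_ne_top hx
  unfold elog
  split_ifs with hx0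
  · exact bot_le
  · exact EReal.coe_le_coe_iff.2 (log_le_log (ENNReal.toReal_pos hx0 hx_top)
      (ENNReal.toReal_le_of_le_ofReal hK.le hx))

lemma sub_le_RSLB {X Y : Type*} [MeasurableSpace X] [MeasurableSpace Y] (μ : Measure X)
    (ρ : X → Y → ℝ≥0∞) (h D : ℝ) {s K : ℝ} (hs : 0 ≤ s) (hK : 0 < K)
    (hν : ⨆ y, ∫⁻ x, expNeg (ENNReal.ofReal s * ρ x y) ∂μ ≤ ENNReal.ofReal K) :
    ((h - (s * D + log K) : ℝ) : EReal) ≤ RSLB μ ρ h D := by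
  rw [RSLB, EReal.coe_sub]
  refine EReal.sub_le_sub le_rfl ((sInf_le (by exact ⟨s, hs, rfl⟩)).trans ?_)
  rw [EReal.coe_add]
  exact add_le_add le_rfl (elog_le_log_of_le_ofReal hK hν)

lemma Fmkc_eq_neg {m k c D : ℝ} (hm : 0 < m) (hk : 0 < k) (hc : 0 < c) (hD : 0 < D) :
    Fmkc m k c D = -(m / (k * D) * D
      + log (c * Gamma (m / k + 1) * (m / (k * D)) ^ (-(m / k)))) := by
  have hs : 0 < m / (k * D) := by positivity
  have hΓ : 0 < Gamma (m / k + 1) := Gamma_pos_of_pos (by positivity)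
  rw [Fmkc, add_comm 1, log_div (by positivity) (mul_pos hc hΓ).ne',
    log_mul (mul_pos hc hΓ).ne' (rpow_pos_of_pos hs _).ne', log_rpow hs, log_rpow hs,
    show m / (k * D) * D = m / k by field_simp]
  ring

theorem RSLB_ge_of_subregular_inf_general
    {X Y : Type*} [MeasurableSpace X] [MeasurableSpace Y]
    (μ : Measure X) (μX : Measure X)
    (ρ : X → Y → ℝ≥0∞) (hρ : Measurable (Function.uncurry ρ))
    (k m c : ℝ) (hk : 0 < k) (hm : 0 < m) (hc : 0 < c)
    (hsub : ∀ y : Y, ∀ t : ℝ, 0 < t →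
      μ {x | (ρ x y) ^ (1 / k) < ENNReal.ofReal t} ≤ ENNReal.ofReal (c * t ^ m)) :
    ∀ D : ℝ, 0 < D →
      (((-(∫ x, Real.log ((μX.rnDeriv μ x).toReal) ∂μX)
          + Fmkc m k c D : ℝ)) : EReal)
        ≤ RSLB μ ρ (-(∫ x, Real.log ((μX.rnDeriv μ x).toReal) ∂μX)) D := by
  intro D hD
  have hs : 0 < m / (k * D) := by positivity
  have hν : ⨆ y, ∫⁻ x, expNeg (ENNReal.ofReal (m / (k * D)) * ρ x y) ∂μ
      ≤ ENNReal.ofReal (c * Gamma (m / k + 1) * (m / (k * D)) ^ (-(m / k))) :=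
    iSup_le fun y => lintegral_expNeg_mul_le_s7 (hρ.comp measurable_prodMk_right) hs
      (by linarith [div_pos hm hk]) hc.le (measure_lt_ofReal_le_of_rpow hk (hsub y))
  have hK : 0 < c * Gamma (m / k + 1) * (m / (k * D)) ^ (-(m / k)) :=
    mul_pos (mul_pos hc (Gamma_pos_of_pos (by positivity))) (rpow_pos_of_pos hs _)
  rw [Fmkc_eq_neg hm hk hc hD, ← sub_eq_add_neg]
  exact sub_le_RSLB μ ρ _ D hs.le hK hν

/-- If `μ` is σ-finite, `μ_X ≪ μ` with finite generalized entropy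
`h_μ(X) = −∫ log(dμ_X/dμ) dμ_X`, and `μ` is `ρ^{1/k}`-subregular of dimension `m` with
constants `c` and `δ₀ = ∞`, then `R_X^{SLB}(D) ≥ h_μ(X) + F_{m,k,c}(D)` for all
`D ∈ (0,∞)`. -/
theorem RSLB_ge_of_subregular_inf
    {X Y : Type*} [MeasurableSpace X] [MeasurableSpace Y]
    (μ : Measure X) [SigmaFinite μ] (μX : Measure X) [IsProbabilityMeasure μX]
    (hac : μX ≪ μ)
    (hent : Integrable (fun x => Real.log ((μX.rnDeriv μ x).toReal)) μX)
    (ρ : X → Y → ℝ≥0∞) (hρ : Measurable (Function.uncurry ρ))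
    (k m c : ℝ) (hk : 0 < k) (hm : 0 < m) (hc : 0 < c)
    (hsub : ∀ y : Y, ∀ t : ℝ, 0 < t →
      μ {x | (ρ x y) ^ (1 / k) < ENNReal.ofReal t} ≤ ENNReal.ofReal (c * t ^ m)) :
    ∀ D : ℝ, 0 < D →
      (((-(∫ x, Real.log ((μX.rnDeriv μ x).toReal) ∂μX)
          + Fmkc m k c D : ℝ)) : EReal)
        ≤ RSLB μ ρ (-(∫ x, Real.log ((μX.rnDeriv μ x).toReal) ∂μX)) D :=
  RSLB_ge_of_subregular_inf_general μ μX ρ hρ k m c hk hm hc hsub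
end
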